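/- arXiv:2504.19410 — 3 statements merged into one kernel-verified Lean document; each statement's English description precedes it below -/
import Mathlib

section
/- Let ε > 0. For every k ∈ ℝ³ with k ≠ 0, ∫_{ℝ³} (1/(4π‖y‖)) Erfc(‖y‖/ε) e^{−i k·y} dy = (1/κ²)(1 − e^{−κ²ε²/4}), where κ = ‖k‖. (This is the Fourier transform of the residual U − U^ε for the 3D Coulomb kernel U(r) = 1/(4πr) with far-field smooth approximation U^ε(r) = Erf(r/ε)/(4πr).) -/
open MeasureTheory Set
open scoped RealInnerProductSpace

/-- The error function `Erf(x) = (2/√π) ∫₀ˣ e^{-t²} dt`. -/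
noncomputable def erf (x : ℝ) : ℝ :=
  (2 / Real.sqrt Real.pi) * ∫ t in (0:ℝ)..x, Real.exp (-t ^ 2)

/-- The complementary error function `Erfc(x) = 1 - Erf(x)`. -/
noncomputable def erfc (x : ℝ) : ℝ := 1 - erf x

section Aux

local notation "E3" => EuclideanSpace ℝ (Fin 3)

lemma gauss_integrable : MeasureTheory.Integrable (fun t : ℝ => Real.exp (-t ^ 2)) := by
  simpa using integrable_exp_neg_mul_sq (b := (1:ℝ)) one_pos

lemma erfc_eq_Ioi (x : ℝ) :
    erfc x = (2 / Real.sqrt Real.pi) * ∫ t in Ioi x, Real.exp (-t ^ 2) := by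
  have h0 : ∫ t in Ioi (0:ℝ), Real.exp (-t ^ 2) = Real.sqrt Real.pi / 2 := by
    simpa using integral_gaussian_Ioi 1
  have key : (∫ t in (0:ℝ)..x, Real.exp (-t ^ 2))
      = (∫ t in Ioi (0:ℝ), Real.exp (-t ^ 2)) - ∫ t in Ioi x, Real.exp (-t ^ 2) := by
    have h1 := intervalIntegral.integral_Iic_add_Ioi (b := x)
      (f := fun t : ℝ => Real.exp (-t ^ 2))
      gauss_integrable.integrableOn gauss_integrable.integrableOn
    have h2 := intervalIntegral.integral_Iic_add_Ioi (b := (0:ℝ))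
      (f := fun t : ℝ => Real.exp (-t ^ 2))
      gauss_integrable.integrableOn gauss_integrable.integrableOn
    have h3 := intervalIntegral.integral_Iic_sub_Iic (a := (0:ℝ)) (b := x)
      (f := fun t : ℝ => Real.exp (-t ^ 2)) (μ := volume)
      gauss_integrable.integrableOn gauss_integrable.integrableOn
    rw [← h3]; linarith
  have hπ : Real.sqrt Real.pi ≠ 0 := by positivity
  rw [erfc, erf, key, h0]
  field_simp
  ring

lemma heat_rep (r T : ℝ) (hr : 0 < r) (hT : 0 < T) :
    ∫ s in Ioc (0:ℝ) T, Real.exp (-r ^ 2 / (4 * s)) / Real.sqrt (4 * Real.pi * s) ^ 3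
      = 1 / (4 * Real.pi * r) * erfc (r / (2 * Real.sqrt T)) := by
  set a : ℝ := r / (2 * Real.sqrt T) with ha_def
  have hsT : 0 < Real.sqrt T := Real.sqrt_pos.mpr hT
  have ha : 0 < a := by positivity
  set f : ℝ → ℝ := fun u => r ^ 2 / (4 * u ^ 2) with hf_def
  have himg : f '' Ioi a = Ioo 0 T := by
    ext s
    constructor
    · rintro ⟨u, hu, rfl⟩
      have hau : a < u := hu
      have hu' : 0 < u := lt_trans ha hau
      have haT : r ^ 2 / (4 * a ^ 2) = T := by
        have h5 : a ^ 2 = r ^ 2 / (4 * T) := by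
          rw [ha_def, div_pow, mul_pow, Real.sq_sqrt hT.le]; norm_num
        rw [h5]; field_simp
      constructor
      · positivity
      · have h4 : 4 * a ^ 2 < 4 * u ^ 2 := by
          have := pow_lt_pow_left₀ hau ha.le (n := 2) two_ne_zero
          linarith
        have : r ^ 2 / (4 * u ^ 2) < r ^ 2 / (4 * a ^ 2) :=
          div_lt_div_of_pos_left (by positivity) (by positivity) h4
        simpa [hf_def, haT] using this
    · rintro ⟨hs0, hsT'⟩
      have hss : 0 < Real.sqrt s := Real.sqrt_pos.mpr hs0
      refine ⟨r / (2 * Real.sqrt s), ?_, ?_⟩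
      · rw [mem_Ioi, ha_def]
        apply div_lt_div_of_pos_left hr (by positivity)
        have := Real.sqrt_lt_sqrt hs0.le hsT'
        nlinarith
      · have h5 : (r / (2 * Real.sqrt s)) ^ 2 = r ^ 2 / (4 * s) := by
          rw [div_pow, mul_pow, Real.sq_sqrt hs0.le]; norm_num
        simp only [hf_def, h5]
        field_simp
  have hderiv : ∀ u ∈ Ioi a, HasDerivWithinAt f (-(r ^ 2) / (2 * u ^ 3)) (Ioi a) u := by
    intro u hu
    have hu' : 0 < u := lt_trans ha hu
    have h1 : HasDerivAt (fun u : ℝ => 4 * u ^ 2) (4 * (2 * u)) u := by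
      simpa using ((hasDerivAt_pow 2 u).const_mul 4)
    have h2 : HasDerivAt f (-(r ^ 2) / (2 * u ^ 3)) u := by
      have := (hasDerivAt_const u (r ^ 2)).div h1 (by positivity)
      refine this.congr_deriv ?_
      have : u ≠ 0 := ne_of_gt hu'
      rw [div_eq_div_iff (by positivity) (by positivity)]
      ring
    exact h2.hasDerivWithinAt
  have hinj : InjOn f (Ioi a) := by
    intro u hu v hv h
    have hu' : 0 < u := lt_trans ha hu
    have hv' : 0 < v := lt_trans ha hv
    simp only [hf_def] at h
    have h2 : u ^ 2 = v ^ 2 := by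
      field_simp at h; nlinarith
    nlinarith
  have key := integral_image_eq_integral_abs_deriv_smul measurableSet_Ioi hderiv hinj
    (fun s => Real.exp (-r ^ 2 / (4 * s)) / Real.sqrt (4 * Real.pi * s) ^ 3)
  rw [himg] at key
  rw [MeasureTheory.integral_Ioc_eq_integral_Ioo, key]
  have hcongr : ∫ u in Ioi a, |(-(r ^ 2) / (2 * u ^ 3))| •
      (Real.exp (-r ^ 2 / (4 * f u)) / Real.sqrt (4 * Real.pi * f u) ^ 3)
      = ∫ u in Ioi a, (2 * Real.sqrt Real.pi ^ 3 * r)⁻¹ * Real.exp (-u ^ 2) := by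
    apply setIntegral_congr_fun measurableSet_Ioi
    intro u hu
    have hu' : 0 < u := lt_trans ha hu
    dsimp only
    have h1 : 4 * Real.pi * f u = Real.pi * r ^ 2 / u ^ 2 := by
      simp only [hf_def]; field_simp
    have h2 : Real.sqrt (Real.pi * r ^ 2 / u ^ 2) = Real.sqrt Real.pi * r / u := by
      rw [show Real.pi * r ^ 2 / u ^ 2 = (Real.sqrt Real.pi * r / u) ^ 2 by
        rw [div_pow, mul_pow, Real.sq_sqrt Real.pi_pos.le]]
      exact Real.sqrt_sq (by positivity)
    have h3 : -r ^ 2 / (4 * f u) = -u ^ 2 := by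
      simp only [hf_def]; field_simp
    have h4 : |(-(r ^ 2) / (2 * u ^ 3))| = r ^ 2 / (2 * u ^ 3) := by
      rw [abs_div, abs_neg, abs_of_nonneg (by positivity : (0:ℝ) ≤ r ^ 2),
        abs_of_nonneg (by positivity : (0:ℝ) ≤ 2 * u ^ 3)]
    rw [h1, h2, h3, h4, smul_eq_mul, div_pow, mul_pow]
    have hπ : (0:ℝ) < Real.sqrt Real.pi := Real.sqrt_pos.mpr Real.pi_pos
    field_simp
  rw [hcongr, MeasureTheory.integral_const_mul, erfc_eq_Ioi]
  set I := ∫ u in Ioi a, Real.exp (-u ^ 2) with hI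
  have hπ : (0:ℝ) < Real.sqrt Real.pi := Real.sqrt_pos.mpr Real.pi_pos
  have hsq : Real.sqrt Real.pi ^ 3 = Real.pi * Real.sqrt Real.pi := by
    rw [pow_succ, Real.sq_sqrt Real.pi_pos.le]
  rw [hsq]
  have hπ2 : Real.pi ≠ 0 := Real.pi_ne_zero
  field_simp
  ring

lemma sqrt_cube_eq_rpow {x : ℝ} (hx : 0 ≤ x) : Real.sqrt x ^ 3 = x ^ (3/2 : ℝ) := by
  rw [Real.sqrt_eq_rpow, ← Real.rpow_natCast (x ^ (1/2:ℝ)) 3, ← Real.rpow_mul hx]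
  norm_num

open Complex in
open scoped FourierTransform in
lemma gauss_fourier (s : ℝ) (hs : 0 < s) (k : E3) :
    ∫ y : E3, (Real.exp (-‖y‖ ^ 2 / (4 * s)) : ℂ) * Complex.exp (-Complex.I * (⟪k, y⟫ : ℝ))
      = ((Real.sqrt (4 * Real.pi * s) ^ 3 : ℝ) : ℂ) * Real.exp (-(s * ‖k‖ ^ 2)) := by
  have hb : (0:ℝ) < (((1 / (4 * s) : ℝ) : ℂ)).re := by
    simp; positivity
  have key := fourier_gaussian_innerProductSpace (V := E3)
    (b := ((1 / (4 * s) : ℝ) : ℂ)) hb ((2 * Real.pi)⁻¹ • k)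
  rw [Real.fourier_eq'] at key
  have hexp : ∀ y : E3,
      Complex.exp (↑(-2 * Real.pi * ⟪y, (2 * Real.pi)⁻¹ • k⟫) * Complex.I) •
        Complex.exp (-((1 / (4 * s) : ℝ) : ℂ) * ‖y‖ ^ 2)
      = (Real.exp (-‖y‖ ^ 2 / (4 * s)) : ℂ) * Complex.exp (-Complex.I * (⟪k, y⟫ : ℝ)) := by
    intro y
    rw [real_inner_smul_right, smul_eq_mul]
    have h1 : (-2) * Real.pi * ((2 * Real.pi)⁻¹ * ⟪y, k⟫) = -⟪y, k⟫ := by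
      field_simp
    rw [h1]
    rw [show (-((1 / (4 * s) : ℝ) : ℂ) * ‖y‖ ^ 2) = ((- ‖y‖^2 / (4*s) : ℝ) : ℂ) by
      push_cast; ring]
    rw [← Complex.ofReal_exp, real_inner_comm y k]
    rw [show ((-⟪y,k⟫ : ℝ) : ℂ) * I = -I * ((⟪y,k⟫ : ℝ) : ℂ) by push_cast; ring]
    ring
  simp_rw [hexp] at key
  rw [key, finrank_euclideanSpace_fin]
  have hπ : (0:ℝ) < Real.pi := Real.pi_pos
  have h2 : ((Real.pi : ℂ) / ((1 / (4 * s) : ℝ) : ℂ)) = ((4 * Real.pi * s : ℝ) : ℂ) := by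
    push_cast
    field_simp
  have h3 : (-(Real.pi:ℂ) ^ 2 * (‖(2 * Real.pi)⁻¹ • k‖ : ℂ) ^ 2 / ((1 / (4 * s) : ℝ) : ℂ))
      = ((-(s * ‖k‖ ^ 2) : ℝ) : ℂ) := by
    rw [norm_smul]
    push_cast
    rw [Real.norm_eq_abs, abs_of_pos (by positivity : (0:ℝ) < (2 * Real.pi)⁻¹)]
    have hπc : (Real.pi : ℂ) ≠ 0 := by exact_mod_cast Real.pi_ne_zero
    have hsc : (s : ℂ) ≠ 0 := by exact_mod_cast hs.ne'
    field_simp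
    push_cast
    field_simp
    ring
  rw [h2, h3]
  have h4 : ((3:ℕ):ℂ) / 2 = (((3/2 : ℝ)):ℂ) := by norm_num
  rw [h4, ← Complex.ofReal_cpow (by positivity : (0:ℝ) ≤ 4 * Real.pi * s),
    ← sqrt_cube_eq_rpow (by positivity : (0:ℝ) ≤ 4 * Real.pi * s), ← Complex.ofReal_exp]

lemma exp_decay_int (c T : ℝ) (hc : c ≠ 0) (hT : 0 < T) :
    ∫ s in Ioc (0:ℝ) T, Real.exp (-(c * s)) = (1 - Real.exp (-(c * T))) / c := by
  rw [← intervalIntegral.integral_of_le hT.le]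
  have hderiv : ∀ x ∈ uIcc (0:ℝ) T,
      HasDerivAt (fun s : ℝ => -c⁻¹ * Real.exp (-(c * s))) (Real.exp (-(c * x))) x := by
    intro x _
    have h1 : HasDerivAt (fun s : ℝ => -(c * s)) (-c) x := by
      simpa using (hasDerivAt_id x).const_mul (-c)
    have h2 := (Real.hasDerivAt_exp (-(c * x))).comp x h1
    have h3 := h2.const_mul (-c⁻¹)
    refine h3.congr_deriv ?_
    rw [show -c⁻¹ * (Real.exp (-(c * x)) * -c) = (c⁻¹ * c) * Real.exp (-(c * x)) by ring,
      inv_mul_cancel₀ hc, one_mul]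
  have hint : IntervalIntegrable (fun s : ℝ => Real.exp (-(c * s))) volume 0 T :=
    (Real.continuous_exp.comp (by continuity)).intervalIntegrable 0 T
  rw [intervalIntegral.integral_eq_sub_of_hasDerivAt hderiv hint]
  field_simp
  rw [mul_zero, neg_zero, Real.exp_zero]; ring

end Aux

/-- Fourier transform of the residual `U - U^ε` of the 3D Coulomb kernel:
`∫_{ℝ³} (1/(4π‖y‖)) Erfc(‖y‖/ε) e^{-i k·y} dy = (1/κ²)(1 - e^{-κ²ε²/4})`, `κ = ‖k‖ ≠ 0`. -/
theorem fourier_residual_coulomb_3d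
    (ε : ℝ) (hε : 0 < ε) (k : EuclideanSpace ℝ (Fin 3)) (hk : k ≠ 0) :
    ∫ y : EuclideanSpace ℝ (Fin 3),
        ((1 / (4 * Real.pi * ‖y‖) * erfc (‖y‖ / ε) : ℝ) : ℂ) *
          Complex.exp (-Complex.I * (⟪k, y⟫ : ℝ)) =
      ((1 / ‖k‖ ^ 2 * (1 - Real.exp (-(‖k‖ ^ 2 * ε ^ 2) / 4)) : ℝ) : ℂ) := by
  have hπ : (0:ℝ) < Real.pi := Real.pi_pos
  have hκ : (0:ℝ) < ‖k‖ := norm_pos_iff.mpr hk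
  set T : ℝ := ε ^ 2 / 4 with hT_def
  have hT : 0 < T := by positivity
  set phase : EuclideanSpace ℝ (Fin 3) → ℂ :=
    fun y => Complex.exp (-Complex.I * ((⟪k, y⟫ : ℝ) : ℂ)) with hphase_def
  have hphase_cont : Continuous phase :=
    Complex.continuous_exp.comp (continuous_const.mul
      (Complex.continuous_ofReal.comp (continuous_const.inner continuous_id)))
  have hphase_norm : ∀ y, ‖phase y‖ = 1 := by
    intro y
    simp only [hphase_def]
    rw [show -Complex.I * ((⟪k, y⟫ : ℝ) : ℂ) = ((-⟪k, y⟫ : ℝ) : ℂ) * Complex.I by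
      push_cast; ring]
    exact Complex.norm_exp_ofReal_mul_I _
  set K : ℝ → EuclideanSpace ℝ (Fin 3) → ℂ := fun s y =>
    ((Real.exp (-‖y‖ ^ 2 / (4 * s)) / Real.sqrt (4 * Real.pi * s) ^ 3 : ℝ) : ℂ) * phase y
    with hK_def
  -- Step 1: rewrite the integrand using the heat-kernel representation
  have step1 : (∫ y : EuclideanSpace ℝ (Fin 3),
        ((1 / (4 * Real.pi * ‖y‖) * erfc (‖y‖ / ε) : ℝ) : ℂ) * phase y)
      = ∫ y : EuclideanSpace ℝ (Fin 3), ∫ s in Ioc (0:ℝ) T, K s y := by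
    apply integral_congr_ae
    have h0 : ∀ᵐ y : EuclideanSpace ℝ (Fin 3), y ≠ 0 := by
      refine (MeasureTheory.ae_iff).mpr ?_
      simpa using measure_singleton (0 : EuclideanSpace ℝ (Fin 3))
    filter_upwards [h0] with y hy
    have hr : 0 < ‖y‖ := norm_pos_iff.mpr hy
    have h2 : ‖y‖ / (2 * Real.sqrt T) = ‖y‖ / ε := by
      rw [hT_def, show ε ^ 2 / 4 = (ε / 2) ^ 2 by ring, Real.sqrt_sq (by positivity)]
      rw [show 2 * (ε / 2) = ε by ring]
    rw [show (1 / (4 * Real.pi * ‖y‖) * erfc (‖y‖ / ε) : ℝ)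
        = 1 / (4 * Real.pi * ‖y‖) * erfc (‖y‖ / (2 * Real.sqrt T)) by rw [h2]]
    rw [← heat_rep ‖y‖ T hr hT, hK_def]
    simp only []
    have hswap : ((∫ s in Ioc (0:ℝ) T,
          Real.exp (-‖y‖ ^ 2 / (4 * s)) / Real.sqrt (4 * Real.pi * s) ^ 3 : ℝ) : ℂ)
        = ∫ s in Ioc (0:ℝ) T,
          ((Real.exp (-‖y‖ ^ 2 / (4 * s)) / Real.sqrt (4 * Real.pi * s) ^ 3 : ℝ) : ℂ) :=
      (integral_ofReal (𝕜 := ℂ)).symm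
    rw [hswap, ← integral_mul_const]
  -- Integrability on the product space
  have hm1 : Measurable fun p : ℝ × EuclideanSpace ℝ (Fin 3) =>
      Real.exp (-‖p.2‖ ^ 2 / (4 * p.1)) / Real.sqrt (4 * Real.pi * p.1) ^ 3 := by
    apply Measurable.div
    · exact Real.measurable_exp.comp
        ((((continuous_norm.comp continuous_snd).pow 2).neg.measurable).div
          ((continuous_const.mul continuous_fst).measurable))
    · exact ((Real.continuous_sqrt.comp
        (continuous_const.mul continuous_fst)).pow 3).measurable
  have hmeas : AEStronglyMeasurable (Function.uncurry K)
      ((volume.restrict (Ioc (0:ℝ) T)).prod volume) := by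
    apply Measurable.aestronglyMeasurable
    exact (Complex.measurable_ofReal.comp hm1).mul
      ((hphase_cont.comp continuous_snd).measurable)
  have hsec : ∀ s : ℝ, 0 < s → Integrable (K s) := by
    intro s hs0
    have base : Integrable (fun y : EuclideanSpace ℝ (Fin 3) =>
        Complex.exp (-(((1 / (4 * s) : ℝ)) : ℂ) * ‖y‖ ^ 2)) := by
      simpa using GaussianFourier.integrable_cexp_neg_mul_sq_norm_add
        (b := ((1 / (4 * s) : ℝ) : ℂ)) (by simp; positivity) 0
        (0 : EuclideanSpace ℝ (Fin 3))
    have hg : Integrable (fun y : EuclideanSpace ℝ (Fin 3) =>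
        ((Real.exp (-‖y‖ ^ 2 / (4 * s)) / Real.sqrt (4 * Real.pi * s) ^ 3 : ℝ) : ℂ)) := by
      refine (base.const_mul ((((Real.sqrt (4 * Real.pi * s) ^ 3 : ℝ)) : ℂ))⁻¹).congr
        (Filter.Eventually.of_forall fun y => ?_)
      simp only []
      rw [show (-(((1 / (4 * s) : ℝ)) : ℂ) * ‖y‖ ^ 2) = ((-‖y‖ ^ 2 / (4 * s) : ℝ) : ℂ) by
        push_cast; ring]
      rw [← Complex.ofReal_exp]
      push_cast [div_eq_mul_inv]
      ring
    have := hg.bdd_mul (hphase_cont.aestronglyMeasurable)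
      (c := 1) (Filter.Eventually.of_forall fun y => (hphase_norm y).le)
    refine this.congr (Filter.Eventually.of_forall fun y => ?_)
    rw [hK_def]
    ring
  have hnorm : ∀ s : ℝ, 0 < s → ∀ y : EuclideanSpace ℝ (Fin 3),
      ‖K s y‖ = Real.exp (-‖y‖ ^ 2 / (4 * s)) / Real.sqrt (4 * Real.pi * s) ^ 3 := by
    intro s hs0 y
    rw [hK_def]
    have hC : (0:ℝ) < Real.sqrt (4 * Real.pi * s) ^ 3 := by positivity
    rw [norm_mul, hphase_norm, mul_one, Complex.norm_real, Real.norm_eq_abs,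
      abs_of_nonneg (by positivity)]
  have hnormint : ∀ s ∈ Ioc (0:ℝ) T, (∫ y : EuclideanSpace ℝ (Fin 3), ‖K s y‖) = 1 := by
    intro s hs
    have hs0 : 0 < s := hs.1
    have hC : (0:ℝ) < Real.sqrt (4 * Real.pi * s) ^ 3 := by positivity
    simp_rw [hnorm s hs0]
    rw [integral_div]
    have hexp : ∀ y : EuclideanSpace ℝ (Fin 3),
        Real.exp (-‖y‖ ^ 2 / (4 * s)) = Real.exp (-(1 / (4 * s)) * ‖y‖ ^ 2) := by
      intro y; congr 1; ring
    simp_rw [hexp]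
    rw [GaussianFourier.integral_rexp_neg_mul_sq_norm (by positivity),
      finrank_euclideanSpace_fin]
    rw [show (Real.pi / (1 / (4 * s))) = 4 * Real.pi * s by field_simp]
    rw [show ((3:ℕ):ℝ) / 2 = (3/2 : ℝ) by norm_num]
    rw [← sqrt_cube_eq_rpow (by positivity : (0:ℝ) ≤ 4 * Real.pi * s)]
    exact div_self hC.ne'
  have hK_int : Integrable (Function.uncurry K)
      ((volume.restrict (Ioc (0:ℝ) T)).prod volume) := by
    rw [MeasureTheory.integrable_prod_iff hmeas]
    constructor
    · filter_upwards [ae_restrict_mem measurableSet_Ioc] with s hs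
      exact hsec s hs.1
    · have heq : (fun s => ∫ y : EuclideanSpace ℝ (Fin 3), ‖Function.uncurry K (s, y)‖)
          =ᵐ[volume.restrict (Ioc (0:ℝ) T)] fun _ => (1:ℝ) := by
        filter_upwards [ae_restrict_mem measurableSet_Ioc] with s hs
        exact hnormint s hs
      refine (MeasureTheory.Integrable.congr ?_ heq.symm)
      exact integrableOn_const measure_Ioc_lt_top.ne
  -- Step 2: swap the integrals (Fubini)
  have step2 : (∫ y : EuclideanSpace ℝ (Fin 3), ∫ s in Ioc (0:ℝ) T, K s y)
      = ∫ s in Ioc (0:ℝ) T, ∫ y : EuclideanSpace ℝ (Fin 3), K s y :=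
    (MeasureTheory.integral_integral_swap hK_int).symm
  -- Step 3: evaluate the inner Gaussian Fourier integral
  have step3 : (∫ s in Ioc (0:ℝ) T, ∫ y : EuclideanSpace ℝ (Fin 3), K s y)
      = ∫ s in Ioc (0:ℝ) T, ((Real.exp (-(‖k‖ ^ 2 * s)) : ℝ) : ℂ) := by
    apply setIntegral_congr_fun measurableSet_Ioc
    intro s hs
    simp only []
    have hs0 : 0 < s := hs.1
    have hC : (0:ℝ) < Real.sqrt (4 * Real.pi * s) ^ 3 := by positivity
    have hCne : (((Real.sqrt (4 * Real.pi * s) ^ 3 : ℝ)) : ℂ) ≠ 0 := by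
      exact_mod_cast hC.ne'
    have h1 : (∫ y : EuclideanSpace ℝ (Fin 3), K s y)
        = (((Real.sqrt (4 * Real.pi * s) ^ 3 : ℝ)) : ℂ)⁻¹ *
          ∫ y : EuclideanSpace ℝ (Fin 3),
            ((Real.exp (-‖y‖ ^ 2 / (4 * s)) : ℝ) : ℂ) * phase y := by
      rw [← integral_const_mul]
      apply integral_congr_ae
      refine Filter.Eventually.of_forall fun y => ?_
      rw [hK_def]
      push_cast [div_eq_mul_inv]
      ring
    rw [h1]
    simp only [hphase_def]
    rw [gauss_fourier s hs0 k]
    rw [← mul_assoc, inv_mul_cancel₀ hCne, one_mul]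
    norm_cast
    ring_nf
  simp only [hphase_def] at step1
  rw [step1, step2, step3]
  have hfin : (∫ s in Ioc (0:ℝ) T, ((Real.exp (-(‖k‖ ^ 2 * s)) : ℝ) : ℂ))
      = ((∫ s in Ioc (0:ℝ) T, Real.exp (-(‖k‖ ^ 2 * s)) : ℝ) : ℂ) :=
    integral_ofReal (𝕜 := ℂ)
  rw [hfin, exp_decay_int (‖k‖ ^ 2) T (by positivity) hT]
  refine Complex.ofReal_inj.mpr ?_
  rw [show -(‖k‖ ^ 2 * T) = -(‖k‖ ^ 2 * ε ^ 2) / 4 by rw [hT_def]; ring]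
  ring
end

section
/- Let ε > 0. For every k ∈ ℝ² with k ≠ 0, ∫_{ℝ²} (1/(4π)) E₁(‖y‖²/ε²) e^{−i k·y} dy = (1/κ²)(1 − e^{−κ²ε²/4}), where κ = ‖k‖. (This is the Fourier transform of the residual U − U^ε for the 2D Poisson kernel U(r) = −(1/2π)ln r with far-field smooth approximation U^ε(r) = −(1/2π)[ln r + (1/2)E₁(r²/ε²)], since U − U^ε = (1/(4π))E₁(r²/ε²).) -/
open MeasureTheory Set
open scoped RealInnerProductSpace

/-- The exponential integral `E₁(x) = ∫ₓ^∞ t⁻¹ e^{-t} dt`. -/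
noncomputable def E1 (x : ℝ) : ℝ := ∫ t in Set.Ioi x, Real.exp (-t) / t

lemma gauss_ft (k : EuclideanSpace ℝ (Fin 2)) {s : ℝ} (hs : 0 < s) :
    ∫ y : EuclideanSpace ℝ (Fin 2),
      Complex.exp (-(s:ℂ)⁻¹ * ‖y‖ ^ 2 + (-Complex.I) * ⟪k, y⟫) =
    ((Real.pi * s : ℝ) : ℂ) * Complex.exp (-(‖k‖ ^ 2 * s : ℝ) / 4) := by
  have hb : 0 < ((s:ℂ)⁻¹).re := by simpa using inv_pos.mpr hs
  rw [GaussianFourier.integral_cexp_neg_mul_sq_norm_add hb (-Complex.I) k]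
  have h2 : ((Module.finrank ℝ (EuclideanSpace ℝ (Fin 2)) : ℂ) / 2 : ℂ) = 1 := by
    simp [finrank_euclideanSpace]
  rw [h2, Complex.cpow_one]
  have hs0 : (s:ℂ) ≠ 0 := by exact_mod_cast hs.ne'
  congr 1
  · push_cast
    field_simp
  · congr 1
    push_cast
    field_simp
    rw [Complex.I_sq]; ring

lemma E1_eq {ε r : ℝ} (hε : 0 < ε) (hr : 0 < r) :
    E1 (r ^ 2 / ε ^ 2) = ∫ s in Ioo 0 (ε ^ 2), Real.exp (-(r ^ 2 / s)) / s := by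
  have himg : (fun s : ℝ => r ^ 2 / s) '' Ioo 0 (ε ^ 2) = Ioi (r ^ 2 / ε ^ 2) := by
    ext t
    simp only [mem_image, mem_Ioo, mem_Ioi]
    constructor
    · rintro ⟨s, ⟨hs0, hs1⟩, rfl⟩
      exact div_lt_div_of_pos_left (by positivity) hs0 hs1
    · intro ht
      have ht0 : 0 < t := lt_trans (by positivity) ht
      refine ⟨r ^ 2 / t, ⟨by positivity, ?_⟩, by field_simp⟩
      rw [div_lt_iff₀ ht0]
      rw [div_lt_iff₀ (by positivity : (0:ℝ) < ε ^ 2)] at ht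
      nlinarith
  have hderiv : ∀ x ∈ Ioo (0:ℝ) (ε ^ 2),
      HasDerivWithinAt (fun s : ℝ => r ^ 2 / s) (r ^ 2 * (-(x ^ 2)⁻¹)) (Ioo 0 (ε ^ 2)) x := by
    intro x hx
    have h := ((hasDerivAt_inv hx.1.ne').const_mul (r ^ 2)).hasDerivWithinAt
      (s := Ioo (0:ℝ) (ε ^ 2))
    simpa [div_eq_mul_inv] using h
  have hinj : InjOn (fun s : ℝ => r ^ 2 / s) (Ioo 0 (ε ^ 2)) := by
    intro a ha b hb hab
    simp only at hab
    have := ha.1.ne'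
    have := hb.1.ne'
    field_simp at hab
    exact hab.symm
  have := integral_image_eq_integral_abs_deriv_smul measurableSet_Ioo hderiv hinj
    (fun t => Real.exp (-t) / t)
  rw [E1, ← himg, this]
  refine setIntegral_congr_fun measurableSet_Ioo (fun x hx => ?_)
  have hx0 : 0 < x := hx.1
  have habs : |r ^ 2 * (-(x ^ 2)⁻¹)| = r ^ 2 / x ^ 2 := by
    rw [abs_mul, abs_neg, abs_inv, abs_of_nonneg (sq_nonneg r), abs_of_nonneg (sq_nonneg x),
      div_eq_mul_inv]
  rw [smul_eq_mul, habs]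
  field_simp

lemma integral_coe {α : Type*} [MeasurableSpace α] (μ : MeasureTheory.Measure α) (f : α → ℝ) :
    ∫ x, ((f x : ℝ) : ℂ) ∂μ = ((∫ x, f x ∂μ : ℝ) : ℂ) :=
  (Complex.ofRealLI.integral_comp_comm f).symm ▸ rfl

/-- Fourier transform of the residual `U - U^ε = (1/(4π)) E₁(r²/ε²)` of the 2D Poisson kernel:
`∫_{ℝ²} (1/(4π)) E₁(‖y‖²/ε²) e^{-i k·y} dy = (1/κ²)(1 - e^{-κ²ε²/4})`, `κ = ‖k‖ ≠ 0`. -/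
theorem fourier_residual_poisson_2d
    (ε : ℝ) (hε : 0 < ε) (k : EuclideanSpace ℝ (Fin 2)) (hk : k ≠ 0) :
    ∫ y : EuclideanSpace ℝ (Fin 2),
        ((1 / (4 * Real.pi) * E1 (‖y‖ ^ 2 / ε ^ 2) : ℝ) : ℂ) *
          Complex.exp (-Complex.I * (⟪k, y⟫ : ℝ)) =
      ((1 / ‖k‖ ^ 2 * (1 - Real.exp (-(‖k‖ ^ 2 * ε ^ 2) / 4)) : ℝ) : ℂ) := by
  have hκ : 0 < ‖k‖ := norm_pos_iff.mpr hk
  have hπ : 0 < Real.pi := Real.pi_pos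
  set a := ε ^ 2 with ha
  have ha0 : 0 < a := by positivity
  set g : ℝ → EuclideanSpace ℝ (Fin 2) → ℂ := fun s y =>
    (((4 * Real.pi * s)⁻¹ : ℝ) : ℂ) *
      Complex.exp (-(s:ℂ)⁻¹ * ‖y‖ ^ 2 + (-Complex.I) * ⟪k, y⟫) with hg
  -- measurability of the uncurried kernel
  have hmeas : AEStronglyMeasurable (fun p : (EuclideanSpace ℝ (Fin 2)) × ℝ => g p.2 p.1)
      (volume.prod (volume.restrict (Ioo 0 a))) := by
    refine Measurable.aestronglyMeasurable ?_
    simp only [hg]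
    apply Measurable.mul
    · exact Complex.measurable_ofReal.comp ((measurable_const.mul measurable_snd).inv)
    · apply Complex.measurable_exp.comp
      apply Measurable.add
      · apply Measurable.mul
        · have heq : (fun p : (EuclideanSpace ℝ (Fin 2)) × ℝ => -((p.2 : ℂ))⁻¹)
              = fun p => ((-(p.2)⁻¹ : ℝ) : ℂ) := by
            funext p; push_cast; ring
          rw [heq]
          exact Complex.measurable_ofReal.comp (measurable_snd.inv.neg)
        · exact (Complex.measurable_ofReal.comp measurable_fst.norm).pow_const 2
      · exact measurable_const.mul (Complex.measurable_ofReal.comp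
          (Continuous.measurable (continuous_const.inner continuous_fst)))
  -- integrability in y for each 0 < s
  have hint_s : ∀ s ∈ Ioo (0:ℝ) a, Integrable (fun y : EuclideanSpace ℝ (Fin 2) => g s y) := by
    intro s hs
    have hb : 0 < ((s:ℂ)⁻¹).re := by simpa using inv_pos.mpr hs.1
    exact (GaussianFourier.integrable_cexp_neg_mul_sq_norm_add hb (-Complex.I) k).const_mul _
  -- norm integral in y equals 1/4
  have hnorm : ∀ s ∈ Ioo (0:ℝ) a,
      (∫ y : EuclideanSpace ℝ (Fin 2), ‖g s y‖) = 1/4 := by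
    intro s hs
    have hs0 : 0 < s := hs.1
    have hptwise : ∀ y : EuclideanSpace ℝ (Fin 2),
        ‖g s y‖ = (4 * Real.pi * s)⁻¹ * Real.exp (-s⁻¹ * ‖y‖ ^ 2) := by
      intro y
      simp only [hg]
      rw [norm_mul, Complex.norm_real, Complex.norm_exp]
      have hre : (-(s:ℂ)⁻¹ * ‖y‖ ^ 2 + (-Complex.I) * (⟪k, y⟫ : ℝ)).re = -s⁻¹ * ‖y‖ ^ 2 := by
        simp [Complex.add_re, Complex.mul_re, Complex.inv_re, Complex.normSq_ofReal,
          Complex.ofReal_re, Complex.ofReal_im]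
        exact Or.inl (by norm_cast)
      rw [hre, Real.norm_eq_abs, abs_of_pos (by positivity)]
    simp_rw [hptwise]
    rw [integral_const_mul, GaussianFourier.integral_rexp_neg_mul_sq_norm (inv_pos.mpr hs0)]
    have h2 : ((Module.finrank ℝ (EuclideanSpace ℝ (Fin 2)) : ℝ) / 2 : ℝ) = 1 := by
      simp [finrank_euclideanSpace]
    rw [h2, Real.rpow_one]
    field_simp
  -- integrability on the product space
  have hInt : Integrable (fun p : (EuclideanSpace ℝ (Fin 2)) × ℝ => g p.2 p.1)
      (volume.prod (volume.restrict (Ioo 0 a))) := by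
    rw [integrable_prod_iff' hmeas]
    constructor
    · filter_upwards [ae_restrict_mem measurableSet_Ioo] with s hs
      exact hint_s s hs
    · have hc : IntegrableOn (fun _ : ℝ => (1/4 : ℝ)) (Ioo 0 a) volume :=
        integrableOn_const measure_Ioo_lt_top.ne
      exact hc.congr (by
        filter_upwards [ae_restrict_mem measurableSet_Ioo] with s hs
        exact (hnorm s hs).symm)
  -- rewrite the integrand a.e.
  have hae : ∀ᵐ y : EuclideanSpace ℝ (Fin 2), y ≠ 0 := by
    refine ae_iff.mpr ?_
    simp only [ne_eq, not_not]
    have : {y : EuclideanSpace ℝ (Fin 2) | y = 0} = {0} := by ext; simp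
    rw [this, measure_singleton]
  have hLHS : ∀ᵐ y : EuclideanSpace ℝ (Fin 2),
      ((1 / (4 * Real.pi) * E1 (‖y‖ ^ 2 / ε ^ 2) : ℝ) : ℂ) *
        Complex.exp (-Complex.I * (⟪k, y⟫ : ℝ)) = ∫ s in Ioo (0:ℝ) a, g s y := by
    filter_upwards [hae] with y hy
    have hny : 0 < ‖y‖ := norm_pos_iff.mpr hy
    rw [E1_eq hε hny]
    have hEq : EqOn (fun s => g s y)
        (fun s => (((4 * Real.pi)⁻¹ * (Real.exp (-(‖y‖ ^ 2 / s)) / s) : ℝ) : ℂ) *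
          Complex.exp (-Complex.I * (⟪k, y⟫ : ℝ))) (Ioo (0:ℝ) a) := by
      intro s hs
      have hs0 : 0 < s := hs.1
      simp only [hg]
      rw [Complex.exp_add]
      have h1 : (-(s:ℂ)⁻¹ * ‖y‖ ^ 2) = ((-(‖y‖ ^ 2 / s) : ℝ) : ℂ) := by
        push_cast
        field_simp
      rw [h1, ← Complex.ofReal_exp]
      push_cast
      ring
    rw [setIntegral_congr_fun measurableSet_Ioo hEq, integral_mul_const, integral_coe,
      integral_const_mul]
    norm_num
    rfl
  rw [integral_congr_ae hLHS]
  rw [integral_integral_swap hInt]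
  have hstep : ∫ s in Ioo (0:ℝ) a, ∫ y : EuclideanSpace ℝ (Fin 2), g s y =
      ∫ s in Ioo (0:ℝ) a, (((1/4 : ℝ) * Real.exp (-(‖k‖ ^ 2)/4 * s) : ℝ) : ℂ) := by
    refine setIntegral_congr_fun measurableSet_Ioo (fun s hs => ?_)
    have hs0 : 0 < s := hs.1
    simp only [hg]
    rw [integral_const_mul, gauss_ft k hs0]
    have harg : (-((‖k‖ ^ 2 * s : ℝ) : ℂ) / 4) = ((-‖k‖ ^ 2 / 4 * s : ℝ) : ℂ) := by
      push_cast; ring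
    rw [harg, ← Complex.ofReal_exp, ← Complex.ofReal_mul, ← Complex.ofReal_mul]
    congr 1
    have h4 : (4 * Real.pi * s) ≠ 0 := by positivity
    field_simp
  rw [hstep, integral_coe]
  congr 1
  rw [← integral_Ioc_eq_integral_Ioo, ← intervalIntegral.integral_of_le ha0.le,
    intervalIntegral.integral_const_mul]
  have hc : (-(‖k‖ ^ 2)/4 : ℝ) ≠ 0 := by
    simp only [ne_eq, div_eq_zero_iff, neg_eq_zero, pow_eq_zero_iff]
    push_neg
    constructor
    · intro h; exact absurd h (by positivity)
    · norm_num
  rw [intervalIntegral.integral_comp_mul_left Real.exp hc, integral_exp]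
  have hca : (-(‖k‖ ^ 2)/4 : ℝ) * a = (-(‖k‖ ^ 2 * a)/4 : ℝ) := by ring
  rw [mul_zero, Real.exp_zero, hca, smul_eq_mul]
  have hκ2 : (‖k‖ : ℝ) ^ 2 ≠ 0 := by positivity
  field_simp
  ring
end

section
/- For every ε > 0 there exists an infinitely differentiable function g : ℝ² → ℝ such that g(x) = −(1/(2π))[ln‖x‖ + (1/2)E₁(‖x‖²/ε²)] for all x ≠ 0. That is, the far-field smooth approximation U^ε(r) = −(1/(2π))[ln r + (1/2)E₁(r²/ε²)] of the 2D Poisson kernel U(r) = −(1/(2π))ln r extends to a smooth function on all of ℝ². -/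
open Set MeasureTheory intervalIntegral Topology Filter

/-- Complex version of `(1 - e^{-z})/z` extended by `1` at `0`. -/
noncomputable def psiC : ℂ → ℂ := fun z => if z = 0 then 1 else (1 - Complex.exp (-z)) / z

lemma psiC_ne (z : ℂ) (hz : z ≠ 0) : psiC z = (1 - Complex.exp (-z)) / z := if_neg hz

lemma psiC_analytic : ∀ z : ℂ, AnalyticAt ℂ psiC z := by
  have hdiff : ∀ z : ℂ, z ≠ 0 → DifferentiableAt ℂ psiC z := by
    intro z hz
    have h1 : DifferentiableAt ℂ (fun w : ℂ => (1 - Complex.exp (-w)) / w) z :=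
      ((differentiableAt_const 1).sub ((Complex.differentiable_exp.comp
        differentiable_neg).differentiableAt)).div differentiableAt_id hz
    refine h1.congr_of_eventuallyEq ?_
    filter_upwards [isOpen_compl_singleton.mem_nhds hz] with w hw
    exact psiC_ne w hw
  intro z
  rcases eq_or_ne z 0 with rfl | hz
  · apply Complex.analyticAt_of_differentiable_on_punctured_nhds_of_continuousAt
    · filter_upwards [self_mem_nhdsWithin] with w hw using hdiff w hw
    · -- continuity at 0 : psiC agrees with slope of  w ↦ 1 - exp(-w)
      have hf : HasDerivAt (fun w : ℂ => 1 - Complex.exp (-w)) 1 0 := by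
        have h2 : HasDerivAt (fun w : ℂ => Complex.exp (-w)) (-1) 0 := by
          have hneg : HasDerivAt (fun w : ℂ => -w) (-1) (0:ℂ) := (hasDerivAt_id (0:ℂ)).neg
          have := HasDerivAt.comp (0:ℂ) (Complex.hasDerivAt_exp (-(0:ℂ))) hneg
          simpa using hneg.cexp
        simpa using h2.const_sub 1
      have hslope := hasDerivAt_iff_tendsto_slope.mp hf
      have heq : ∀ w : ℂ, w ≠ 0 → slope (fun w : ℂ => 1 - Complex.exp (-w)) 0 w = psiC w := by
        intro w hw
        rw [psiC_ne w hw, slope_def_field]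
        simp [div_eq_div_iff hw hw]
      rw [← continuousWithinAt_compl_self]
      have : psiC 0 = 1 := if_pos rfl
      rw [ContinuousWithinAt, this]
      refine hslope.congr' ?_
      filter_upwards [self_mem_nhdsWithin] with w hw using heq w hw
  · have hopen : IsOpen ({0}ᶜ : Set ℂ) := isOpen_compl_singleton
    have hdo : DifferentiableOn ℂ psiC ({0}ᶜ : Set ℂ) :=
      fun w hw => (hdiff w hw).differentiableWithinAt
    exact hdo.analyticAt (hopen.mem_nhds hz)

/-- Real version: smooth extension of `(1 - e^{-t})/t`. -/
noncomputable def psiR : ℝ → ℝ := fun t => (psiC t).re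

lemma psiR_contDiff : ContDiff ℝ (⊤ : ℕ∞) psiR := by
  have h1 : ContDiff ℂ (⊤ : ℕ∞) psiC := by
    apply AnalyticOn.contDiff
    exact fun z _ => (psiC_analytic z).analyticWithinAt
  exact Complex.reCLM.contDiff.comp ((h1.restrict_scalars ℝ).comp Complex.ofRealCLM.contDiff)

lemma psiR_ne (t : ℝ) (ht : t ≠ 0) : psiR t = (1 - Real.exp (-t)) / t := by
  have h0 : (t : ℂ) ≠ 0 := by exact_mod_cast ht
  rw [psiR, psiC_ne _ h0]
  have : (((1 - Real.exp (-t)) / t : ℝ) : ℂ) = ((1 : ℂ) - Complex.exp (-(t:ℂ))) / (t:ℂ) := by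
    rw [Complex.ofReal_div, Complex.ofReal_sub, Complex.ofReal_one, Complex.ofReal_exp,
      Complex.ofReal_neg]
  rw [← this, Complex.ofReal_re]

lemma E1_integrableOn {a : ℝ} (ha : 0 < a) :
    IntegrableOn (fun t => Real.exp (-t) / t) (Ioi a) := by
  have hmeas : AEStronglyMeasurable (fun t => Real.exp (-t) / t) (volume.restrict (Ioi a)) := by
    refine ContinuousOn.aestronglyMeasurable ?_ measurableSet_Ioi
    refine ContinuousOn.div (Real.continuous_exp.comp continuous_neg).continuousOn
      continuousOn_id fun t ht => ?_
    exact ne_of_gt (lt_trans ha ht)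
  have hbound : IntegrableOn (fun t => Real.exp (-1 * t) * a⁻¹) (Ioi a) :=
    (exp_neg_integrableOn_Ioi a one_pos).mul_const _
  refine Integrable.mono' hbound hmeas ?_
  filter_upwards [ae_restrict_mem measurableSet_Ioi] with t ht
  have htpos : 0 < t := lt_trans ha ht
  rw [Real.norm_eq_abs, abs_of_nonneg (by positivity), neg_one_mul, ← div_eq_mul_inv]
  exact div_le_div_of_nonneg_left (Real.exp_nonneg _) ha ht.le

lemma E1_split {u v : ℝ} (hu : 0 < u) (hv : 0 < v) :
    E1 u = (∫ t in u..v, Real.exp (-t) / t) + E1 v := by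
  have key : ∀ a b : ℝ, 0 < a → a ≤ b →
      E1 a = (∫ t in a..b, Real.exp (-t) / t) + E1 b := by
    intro a b ha hab
    rw [intervalIntegral.integral_of_le hab, E1, E1]
    rw [← Set.Ioc_union_Ioi_eq_Ioi hab]
    rw [setIntegral_union (Set.Ioc_disjoint_Ioi le_rfl) measurableSet_Ioi
      ((E1_integrableOn ha).mono_set Set.Ioc_subset_Ioi_self)
      ((E1_integrableOn ha).mono_set (Set.Ioi_subset_Ioi hab))]
  rcases le_total u v with h | h
  · exact key u v hu h
  · have := key v u hv h
    rw [intervalIntegral.integral_symm]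
    linarith [this]

lemma E1_hasDerivAt {y : ℝ} (hy : 0 < y) :
    HasDerivAt E1 (-(Real.exp (-y) / y)) y := by
  set f : ℝ → ℝ := fun t => Real.exp (-t) / t with hf
  have hmain : HasDerivAt (fun s => E1 y - ∫ t in y..s, f t) (-(f y)) y := by
    have hint : IntervalIntegrable f volume y y := IntervalIntegrable.refl
    have hmeas : StronglyMeasurableAtFilter f (𝓝 y) := by
      refine ⟨Ioi 0, Ioi_mem_nhds hy, ?_⟩
      refine ContinuousOn.aestronglyMeasurable ?_ measurableSet_Ioi
      exact ContinuousOn.div (Real.continuous_exp.comp continuous_neg).continuousOn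
        continuousOn_id fun t ht => ne_of_gt ht
    have hcont : ContinuousAt f y :=
      ((Real.continuous_exp.comp continuous_neg).continuousAt).div continuousAt_id (ne_of_gt hy)
    exact (intervalIntegral.integral_hasDerivAt_right hint hmeas hcont).const_sub _
  refine hmain.congr_of_eventuallyEq ?_
  filter_upwards [Ioi_mem_nhds hy] with s hs
  have := E1_split hs hy
  rw [intervalIntegral.integral_symm] at this
  linarith [this]

/-- The far-field smooth approximation `U^ε(r) = -(1/(2π))[ln r + (1/2)E₁(r²/ε²)]` of the
2D Poisson kernel extends to a `C^∞` function on all of `ℝ²`. -/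
theorem poisson_2d_farfield_smooth (ε : ℝ) (hε : 0 < ε) :
    ∃ g : EuclideanSpace ℝ (Fin 2) → ℝ, ContDiff ℝ (⊤ : ℕ∞) g ∧
      ∀ x : EuclideanSpace ℝ (Fin 2), x ≠ 0 →
        g x = -(1 / (2 * Real.pi)) *
          (Real.log ‖x‖ + (1 / 2) * E1 (‖x‖ ^ 2 / ε ^ 2)) := by
  have hε2 : (0:ℝ) < ε ^ 2 := by positivity
  -- the smoothed integrand
  set ψ : ℝ → ℝ := fun t => (1 / ε ^ 2) * psiR (t / ε ^ 2) with hψdef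
  have hψsmooth : ContDiff ℝ (⊤ : ℕ∞) ψ :=
    contDiff_const.mul (psiR_contDiff.comp (contDiff_id.div_const _))
  have hψcont : Continuous ψ := hψsmooth.continuous
  have hψval : ∀ t : ℝ, 0 < t → ψ t = (1 - Real.exp (-(t / ε ^ 2))) / t := by
    intro t ht
    rw [hψdef]
    show (1 / ε ^ 2) * psiR (t / ε ^ 2) = _
    rw [psiR_ne _ (by positivity)]
    field_simp
  -- antiderivative
  set G : ℝ → ℝ := fun s => ∫ t in (1:ℝ)..s, ψ t with hGdef
  have hG : ∀ s : ℝ, HasDerivAt G (ψ s) s := by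
    intro s
    exact intervalIntegral.integral_hasDerivAt_right
      (hψcont.intervalIntegrable _ _)
      (hψcont.stronglyMeasurable.stronglyMeasurableAtFilter)
      hψcont.continuousAt
  have hGsmooth : ContDiff ℝ (⊤ : ℕ∞) G := by
    rw [contDiff_infty_iff_deriv]
    refine ⟨fun s => (hG s).differentiableAt, ?_⟩
    have : deriv G = ψ := funext fun s => (hG s).deriv
    rw [this]; exact hψsmooth
  -- key identity
  have hkey : ∀ s : ℝ, 0 < s →
      Real.log s + E1 (s / ε ^ 2) = E1 (1 / ε ^ 2) + G s := by
    intro s hs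
    have hderiv : ∀ t ∈ Set.uIcc (1:ℝ) s,
        HasDerivAt (fun u => Real.log u + E1 (u / ε ^ 2)) (ψ t) t := by
      intro t ht
      have htpos : 0 < t := lt_of_lt_of_le (lt_min one_pos hs) ht.1
      have h1 : HasDerivAt Real.log t⁻¹ t := Real.hasDerivAt_log (ne_of_gt htpos)
      have h2 : HasDerivAt (fun u : ℝ => E1 (u / ε ^ 2))
          (-(Real.exp (-(t / ε ^ 2)) / (t / ε ^ 2)) * (1 / ε ^ 2)) t := by
        have hpos : 0 < t / ε ^ 2 := by positivity
        exact (E1_hasDerivAt hpos).comp t ((hasDerivAt_id t).div_const _)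
      have h3 := h1.add h2
      refine h3.congr_deriv ?_
      rw [hψval t htpos]
      field_simp
      ring
    have hint : IntervalIntegrable ψ volume 1 s := hψcont.intervalIntegrable _ _
    have := intervalIntegral.integral_eq_sub_of_hasDerivAt hderiv hint
    rw [hGdef]
    simp only [Real.log_one] at this ⊢
    have h1 : (∫ t in (1:ℝ)..s, ψ t) =
        (Real.log s + E1 (s / ε ^ 2)) - (0 + E1 (1 / ε ^ 2)) := by
      simpa using this
    linarith [h1]
  -- the smooth extension
  refine ⟨fun x => -(1 / (2 * Real.pi)) *
      ((1/2) * E1 (1 / ε ^ 2) + (1/2) * G (‖x‖ ^ 2)), ?_, ?_⟩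
  · exact contDiff_const.mul (contDiff_const.add
      (contDiff_const.mul (hGsmooth.comp (contDiff_norm_sq ℝ))))
  · intro x hx
    have hxnorm : 0 < ‖x‖ := norm_pos_iff.mpr hx
    have hs : 0 < ‖x‖ ^ 2 := by positivity
    have h := hkey (‖x‖ ^ 2) hs
    have hlog : Real.log (‖x‖ ^ 2) = 2 * Real.log ‖x‖ := by
      rw [Real.log_pow]; push_cast; ring
    rw [hlog] at h
    have : Real.log ‖x‖ + (1/2) * E1 (‖x‖ ^ 2 / ε ^ 2) =
        (1/2) * E1 (1 / ε ^ 2) + (1/2) * G (‖x‖ ^ 2) := by linarith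
    show -(1 / (2 * Real.pi)) *
        ((1/2) * E1 (1 / ε ^ 2) + (1/2) * G (‖x‖ ^ 2)) = _
    rw [← this]
end
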